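/- With ε_S = ε̄₀∏_{i∈S}ε̄ᵢ as above (ε̄₀,...,ε̄_n mutually independent Rademacher, N = 2^n), almost surely either all ε_S equal 1, or all equal −1, or exactly half of them equal 1; and P(all ε_S = 1) = P(all ε_S = −1) = 1/2^{n+1} = 1/(2N). Consequently, for all p ≥ 2, E|∑_{S⊆{1,...,n}} ε_S|^p = N^{p−1} and C(N,p,2) = N^{1/2−1/p} for N = 2^n. -/

import Mathlib

open MeasureTheory ENNReal

noncomputable section

/-- A family `ε` of ±1-valued (Rademacher) random variables which is `k`-wise independent:
every collection of at most `k` coordinates takes any prescribed pattern of signs with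
probability `(1/2)^(number of coordinates)`. -/
def IsKWiseRademacher {Ω : Type*} [MeasurableSpace Ω] (μ : Measure Ω)
    {ι : Type*} [DecidableEq ι] (k : ℕ) (ε : ι → Ω → ℝ) : Prop :=
  (∀ i, Measurable (ε i)) ∧
  ∀ s : Finset ι, s.card ≤ k → ∀ σ : ι → ℝ, (∀ i, σ i = 1 ∨ σ i = -1) →
    μ {ω | ∀ i ∈ s, ε i ω = σ i} = (2 : ℝ≥0∞)⁻¹ ^ s.card

/-- `CNpk N p k` : the best constant in the upper Khintchine inequality with exponent `p`
over all `k`-wise independent Rademacher vectors of length `N` and unit vectors `a`. -/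
def CNpk (N : ℕ) (p : ℝ) (k : ℕ) : ℝ :=
  sSup {x : ℝ | ∃ (Ω : Type) (_ : MeasurableSpace Ω) (μ : Measure Ω),
    IsProbabilityMeasure μ ∧ ∃ (ε : Fin N → Ω → ℝ) (a : Fin N → ℝ),
      IsKWiseRademacher μ k ε ∧ (∑ i, (a i) ^ 2 = 1) ∧
      x = (∫ ω, |∑ i, a i * ε i ω| ^ p ∂μ) ^ (1 / p)}

/-!
Almost surely `x = (ε̄₀, …, ε̄ₙ)` is a vector of signs, and then `ε_S = signProd x S` satisfies
`∑_S ε_S = x₀ ∏ᵢ (1 + xᵢ)`: this is `±2ⁿ` on the event `{x₁ = ⋯ = xₙ = 1}` of probability `2⁻ⁿ`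
and `0` off it. Together with `2 #{S | ε_S = 1} = 2ⁿ + ∑_S ε_S` this gives the trichotomy and
`E|∑_S ε_S|^p = N^{p-1}`. The event that all `ε_S` equal `c = ±1` is exactly `{x = (c, 1, …, 1)}`.

For `C(N, p, 2)`: pairwise independent signs satisfy `E (∑ aᵢεᵢ)² = ∑ aᵢ² = 1`, while
`(∑ aᵢεᵢ)² ≤ N` by Cauchy–Schwarz, so `E|∑ aᵢεᵢ|^p ≤ N^{p/2-1}`. Equality holds for the `ε_S`
built from the coordinates of the uniform cube `{±1}^{n+1}`, with `a_S = N^{-1/2}`. These are the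
characters of the distinct nonempty sets `{0} ∪ (S + 1)`, and signs are `k`-wise independent as
soon as all products of at most `k` of them have mean zero, because the indicator of
`{εᵢ = σᵢ for i ∈ s}` is `∏_{i ∈ s} (1 + σᵢεᵢ) / 2`. On the cube the mean of
`∏_{i ∈ t} ∏_{l ∈ A i} x_l = ∏_l x_l ^ #{i ∈ t | l ∈ A i}` factors over the coordinates `l`.
-/

open Finset

lemma two_mul_card_filter_eq_one {ι : Type*} {s : Finset ι} {g : ι → ℝ}
    (hg : ∀ i ∈ s, g i = 1 ∨ g i = -1) :
    2 * (#(s.filter (g · = 1)) : ℝ) = #s + ∑ i ∈ s, g i := by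
  have hsum : ∑ i ∈ s, g i = ∑ i ∈ s, (2 * (if g i = 1 then 1 else 0) - 1) :=
    sum_congr rfl fun i hi => by rcases hg i hi with h | h <;> norm_num [h]
  rw [hsum, sum_sub_distrib, ← mul_sum, sum_boole]
  simp

lemma prod_eq_one_or_neg_one {ι : Type*} {s : Finset ι} {y : ι → ℝ}
    (hy : ∀ i ∈ s, y i = 1 ∨ y i = -1) : ∏ i ∈ s, y i = 1 ∨ ∏ i ∈ s, y i = -1 := by
  rw [← abs_eq zero_le_one, abs_prod]
  exact prod_eq_one fun i hi => by rcases hy i hi with h | h <;> simp [h]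

lemma prod_one_add_mul_div_two {ι : Type*} {s : Finset ι} {σ y : ι → ℝ} (hσ : ∀ i, σ i = 1 ∨ σ i = -1)
    (hy : ∀ i ∈ s, y i = 1 ∨ y i = -1) :
    ∏ i ∈ s, (1 + σ i * y i) / 2 = if ∀ i ∈ s, y i = σ i then 1 else 0 := by
  rw [← prod_boole]
  refine prod_congr rfl fun i hi => ?_
  rcases hσ i with h1 | h1 <;> rcases hy i hi with h2 | h2 <;> norm_num [h1, h2]

lemma abs_rpow_le_of_sq_le {x N p : ℝ} (hx : x ^ 2 ≤ N) (hp : 2 ≤ p) :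
    |x| ^ p ≤ N ^ (p / 2 - 1) * x ^ 2 := by
  have hx2 : 0 ≤ x ^ 2 := sq_nonneg x
  calc |x| ^ p = (x ^ 2) ^ (p / 2) := by
        rw [← sq_abs, ← Real.rpow_natCast, ← Real.rpow_mul (abs_nonneg x)]
        ring_nf
    _ = (x ^ 2) ^ (p / 2 - 1) * x ^ 2 := by
        rw [← Real.rpow_add_one' hx2 (by linarith), sub_add_cancel]
    _ ≤ N ^ (p / 2 - 1) * x ^ 2 :=
        mul_le_mul_of_nonneg_right (Real.rpow_le_rpow hx2 hx (by linarith)) hx2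

def signProd {n : ℕ} (x : Fin (n + 1) → ℝ) (S : Finset (Fin n)) : ℝ :=
  x 0 * ∏ i ∈ S, x i.succ

section SignProd

variable {n : ℕ} {x : Fin (n + 1) → ℝ}

lemma sum_signProd (x : Fin (n + 1) → ℝ) :
    ∑ S, signProd x S = x 0 * ∏ i : Fin n, (1 + x i.succ) := by
  rw [prod_one_add, powerset_univ, mul_sum]
  rfl

lemma signProd_of_forall_succ_eq_one (h : ∀ i : Fin n, x i.succ = 1) (S : Finset (Fin n)) :
    signProd x S = x 0 := by
  simp [signProd, h]

lemma forall_signProd_eq_iff {c : ℝ} (hc : c ≠ 0) :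
    (∀ S, signProd x S = c) ↔ ∀ j, x j = (Fin.cons c (fun _ => 1) : Fin (n + 1) → ℝ) j := by
  constructor
  · intro h j
    have h0 : x 0 = c := by simpa [signProd] using h ∅
    refine Fin.cases h0 (fun i => ?_) j
    have hi := h {i}
    rw [signProd, prod_singleton, h0] at hi
    simpa using mul_left_cancel₀ hc (hi.trans (mul_one c).symm)
  · intro h S
    rw [signProd_of_forall_succ_eq_one (fun i => by simpa using h i.succ), h 0]
    rfl

lemma signProd_eq_one_or_neg_one (hx : ∀ j, x j = 1 ∨ x j = -1) (S : Finset (Fin n)) :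
    signProd x S = 1 ∨ signProd x S = -1 := by
  rcases hx 0 with h0 | h0 <;> rcases prod_eq_one_or_neg_one fun i (_ : i ∈ S) => hx i.succ with
    hS | hS <;> simp [signProd, h0, hS]

lemma signProd_trichotomy (hx : ∀ j, x j = 1 ∨ x j = -1) :
    (∀ S, signProd x S = 1) ∨ (∀ S, signProd x S = -1) ∨
      2 * (univ.filter (fun S => signProd x S = 1)).card = 2 ^ n := by
  by_cases hall : ∀ i : Fin n, x i.succ = 1
  · rcases hx 0 with h0 | h0
    · exact Or.inl fun S => (signProd_of_forall_succ_eq_one hall S).trans h0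
    · exact Or.inr (Or.inl fun S => (signProd_of_forall_succ_eq_one hall S).trans h0)
  · obtain ⟨i, hi⟩ := not_forall.mp hall
    have hzero : ∑ S, signProd x S = 0 := by
      rw [sum_signProd, prod_eq_zero (mem_univ i) (by norm_num [(hx i.succ).resolve_left hi]),
        mul_zero]
    have hcount :=
      two_mul_card_filter_eq_one (s := univ) fun S _ => signProd_eq_one_or_neg_one hx S
    rw [hzero, add_zero, card_univ, Fintype.card_finset, Fintype.card_fin] at hcount
    exact Or.inr (Or.inr (by exact_mod_cast hcount))

lemma abs_sum_signProd (hx : ∀ j, x j = 1 ∨ x j = -1) :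
    |∑ S, signProd x S| = if ∀ i : Fin n, x i.succ = 1 then 2 ^ n else 0 := by
  rw [sum_signProd, abs_mul, abs_prod]
  have h0 : |x 0| = 1 := by rcases hx 0 with h | h <;> simp [h]
  split_ifs with hall
  · simp [h0, hall]
    norm_num
  · obtain ⟨i, hi⟩ := not_forall.mp hall
    rw [prod_eq_zero (mem_univ i) (by norm_num [(hx i.succ).resolve_left hi]), mul_zero]

end SignProd

def signSupport {n : ℕ} (S : Finset (Fin n)) : Finset (Fin (n + 1)) :=
  cons 0 (S.map (Fin.succEmb n)) (by simp [Fin.succ_ne_zero])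

lemma signProd_eq_prod_signSupport {n : ℕ} (x : Fin (n + 1) → ℝ) (S : Finset (Fin n)) :
    signProd x S = ∏ j ∈ signSupport S, x j := by
  simp [signProd, signSupport]

lemma signSupport_injective {n : ℕ} : Function.Injective (signSupport (n := n)) := by
  intro S T h
  ext i
  simpa [signSupport, Fin.succ_ne_zero] using congrArg (i.succ ∈ ·) h

section Rademacher

variable {Ω : Type*} [MeasurableSpace Ω] {μ : Measure Ω} {ι : Type*} {k : ℕ} {ε : ι → Ω → ℝ}

lemma integrable_prod_of_ae_sign [IsFiniteMeasure μ] (hmeas : ∀ i, Measurable (ε i))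
    (hsign : ∀ i, ∀ᵐ ω ∂μ, ε i ω = 1 ∨ ε i ω = -1) (t : Finset ι) :
    Integrable (fun ω => ∏ i ∈ t, ε i ω) μ := by
  refine Integrable.of_bound (measurable_prod t fun i _ => hmeas i).aestronglyMeasurable 1 ?_
  filter_upwards [(Filter.eventually_all_finset t).2 fun i _ => hsign i] with ω hω
  rw [Real.norm_eq_abs, abs_prod]
  exact (prod_eq_one fun i hi => by rcases hω i hi with h | h <;> simp [h]).le

variable [DecidableEq ι]

theorem IsKWiseRademacher.of_integral_prod_eq_zero [IsProbabilityMeasure μ]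
    (hmeas : ∀ i, Measurable (ε i)) (hsign : ∀ i, ∀ᵐ ω ∂μ, ε i ω = 1 ∨ ε i ω = -1)
    (hmom : ∀ t : Finset ι, t.Nonempty → #t ≤ k → ∫ ω, ∏ i ∈ t, ε i ω ∂μ = 0) :
    IsKWiseRademacher μ k ε := by
  refine ⟨hmeas, fun s hs σ hσ => ?_⟩
  set E := {ω | ∀ i ∈ s, ε i ω = σ i}
  have hE : MeasurableSet E := by
    have : E = ⋂ i ∈ s, ε i ⁻¹' {σ i} := by ext; simp [E]
    rw [this]
    exact Finset.measurableSet_biInter s fun i _ => hmeas i (measurableSet_singleton _)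
  have hind : E.indicator 1 =ᵐ[μ]
      fun ω => (2⁻¹ : ℝ) ^ #s * ∑ t ∈ s.powerset, (∏ i ∈ t, σ i) * ∏ i ∈ t, ε i ω := by
    filter_upwards [(Filter.eventually_all_finset s).2 fun i _ => hsign i] with ω hω
    calc E.indicator 1 ω = ∏ i ∈ s, (1 + σ i * ε i ω) / 2 := by
          rw [prod_one_add_mul_div_two hσ hω]
          simp [Set.indicator, E]
      _ = _ := by
          simp_rw [div_eq_inv_mul, prod_mul_distrib, prod_const, prod_one_add, prod_mul_distrib]
  have hterm : ∀ t ∈ s.powerset,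
      ∫ ω, (∏ i ∈ t, σ i) * ∏ i ∈ t, ε i ω ∂μ = if t = ∅ then 1 else 0 := by
    intro t ht
    split_ifs with h0
    · simp [h0]
    · rw [integral_const_mul, hmom t (nonempty_iff_ne_empty.2 h0)
        ((card_le_card (mem_powerset.1 ht)).trans hs), mul_zero]
  have hreal : μ.real E = 2⁻¹ ^ #s := by
    rw [← integral_indicator_one hE, integral_congr_ae hind, integral_const_mul,
      integral_finsetSum _ fun t _ => (integrable_prod_of_ae_sign hmeas hsign t).const_mul _,
      sum_congr rfl hterm, sum_ite_eq' _ _ _, if_pos (empty_mem_powerset s), mul_one]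
  rw [← ofReal_measureReal, hreal, ENNReal.ofReal_pow (by norm_num), ENNReal.ofReal_inv_of_pos
    (by norm_num)]
  simp

namespace IsKWiseRademacher

lemma measure_eq (h : IsKWiseRademacher μ k ε) (hk : 1 ≤ k) (i : ι) {c : ℝ}
    (hc : c = 1 ∨ c = -1) : μ {ω | ε i ω = c} = 2⁻¹ := by
  simpa using h.2 {i} (by simpa using hk) (fun _ => c) fun _ => hc

lemma measure_and_eq (h : IsKWiseRademacher μ k ε) (hk : 2 ≤ k) {i j : ι} (hij : i ≠ j) {c : ℝ}
    (hc : c = 1 ∨ c = -1) : μ {ω | ε i ω = c ∧ ε j ω = c} = 2⁻¹ ^ 2 := by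
  simpa [card_pair hij] using h.2 {i, j} (by rwa [card_pair hij]) (fun _ => c) fun _ => hc

variable [IsProbabilityMeasure μ]

lemma ae_eq_one_or_neg_one (h : IsKWiseRademacher μ k ε) (hk : 1 ≤ k) (i : ι) :
    ∀ᵐ ω ∂μ, ε i ω = 1 ∨ ε i ω = -1 := by
  have hmeas (c : ℝ) : MeasurableSet {ω | ε i ω = c} := h.1 i (measurableSet_singleton c)
  have hdisj : Disjoint {ω | ε i ω = 1} {ω | ε i ω = -1} :=
    Set.disjoint_left.2 fun ω (h1 : ε i ω = 1) (h2 : ε i ω = -1) => by norm_num [h1] at h2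
  rw [ae_iff_measure_eq (p := fun ω => ε i ω = 1 ∨ ε i ω = -1)
    ((hmeas 1).union (hmeas (-1))).nullMeasurableSet, Set.ofPred_or,
    measure_union hdisj (hmeas (-1)), h.measure_eq hk i (Or.inl rfl),
    h.measure_eq hk i (Or.inr rfl), ENNReal.inv_two_add_inv_two, measure_univ]

lemma integral_mul (h : IsKWiseRademacher μ k ε) (hk : 2 ≤ k) (i j : ι) :
    ∫ ω, ε i ω * ε j ω ∂μ = if i = j then 1 else 0 := by
  have hsign := h.ae_eq_one_or_neg_one (by omega)
  split_ifs with hij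
  · subst hij
    have hsq : (fun ω => ε i ω * ε i ω) =ᵐ[μ] fun _ => 1 := by
      filter_upwards [hsign i] with ω hω
      rcases hω with h | h <;> simp [h]
    simp [integral_congr_ae hsq]
  · set P := {ω | ε i ω = 1 ∧ ε j ω = 1}
    set Q := {ω | ε i ω = -1 ∧ ε j ω = -1}
    have hset (l : ι) (c : ℝ) : MeasurableSet {ω | ε l ω = c} := h.1 l (measurableSet_singleton c)
    have hP : MeasurableSet P := (hset i 1).inter (hset j 1)
    have hQ : MeasurableSet Q := (hset i (-1)).inter (hset j (-1))
    have hrepr : (fun ω => ε i ω * ε j ω) =ᵐ[μ]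
        fun ω => (2 : ℝ) * P.indicator 1 ω + 2 * Q.indicator 1 ω - 1 := by
      filter_upwards [hsign i, hsign j] with ω hi hj
      rcases hi with hi | hi <;> rcases hj with hj | hj <;> norm_num [P, Q, hi, hj]
    have hint (s : Set Ω) (hs : MeasurableSet s) :
        Integrable (fun ω => (2 : ℝ) * s.indicator 1 ω) μ :=
      ((integrable_const (1 : ℝ)).indicator hs).const_mul 2
    have hPQ : Integrable (fun ω => (2 : ℝ) * P.indicator 1 ω + 2 * Q.indicator 1 ω) μ :=
      (hint P hP).add (hint Q hQ)
    rw [integral_congr_ae hrepr, integral_sub hPQ (integrable_const 1),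
      integral_add (hint P hP) (hint Q hQ), integral_const_mul, integral_const_mul,
      integral_indicator_one hP, integral_indicator_one hQ, measureReal_def, measureReal_def,
      h.measure_and_eq hk hij (Or.inl rfl), h.measure_and_eq hk hij (Or.inr rfl)]
    norm_num

lemma integral_sq_sum [Fintype ι] (h : IsKWiseRademacher μ k ε) (hk : 2 ≤ k) (a : ι → ℝ) :
    ∫ ω, (∑ i, a i * ε i ω) ^ 2 ∂μ = ∑ i, a i ^ 2 := by
  have hsign := h.ae_eq_one_or_neg_one (by omega)
  have hint (i j : ι) : Integrable (fun ω => a i * a j * (ε i ω * ε j ω)) μ := by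
    refine Integrable.of_bound (((h.1 i).mul (h.1 j)).const_mul _).aestronglyMeasurable
      |a i * a j| ?_
    filter_upwards [hsign i, hsign j] with ω hi hj
    rcases hi with hi | hi <;> rcases hj with hj | hj <;> simp [hi, hj]
  have hexp (ω : Ω) :
      (∑ i, a i * ε i ω) ^ 2 = ∑ i, ∑ j, a i * a j * (ε i ω * ε j ω) := by
    rw [sq, sum_mul_sum]
    exact sum_congr rfl fun i _ => sum_congr rfl fun j _ => by ring
  simp_rw [hexp]
  rw [integral_finsetSum _ fun i _ => integrable_finsetSum _ fun j _ => hint i j]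
  refine sum_congr rfl fun i _ => ?_
  rw [integral_finsetSum _ fun j _ => hint i j]
  simp [integral_const_mul, h.integral_mul hk, sq]

theorem rpow_integral_abs_sum_le [Fintype ι] (h : IsKWiseRademacher μ 2 ε) {a : ι → ℝ}
    (ha : ∑ i, a i ^ 2 = 1) {p : ℝ} (hp : 2 ≤ p) :
    (∫ ω, |∑ i, a i * ε i ω| ^ p ∂μ) ^ (1 / p) ≤ (Fintype.card ι : ℝ) ^ ((1 : ℝ) / 2 - 1 / p) := by
  set N : ℝ := (Fintype.card ι : ℝ)
  have hsq : ∀ᵐ ω ∂μ, (∑ i, a i * ε i ω) ^ 2 ≤ N := by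
    filter_upwards [ae_all_iff.2 (h.ae_eq_one_or_neg_one one_le_two)] with ω hω
    have hterm (i : ι) : (a i * ε i ω) ^ 2 = a i ^ 2 := by rcases hω i with h | h <;> simp [h]
    simpa [hterm, ha, N] using sq_sum_le_card_mul_sum_sq (s := univ) (f := fun i => a i * ε i ω)
  have hint : Integrable (fun ω => N ^ (p / 2 - 1) * (∑ i, a i * ε i ω) ^ 2) μ := by
    refine (Integrable.of_bound ?_ N ?_).const_mul _
    · exact ((Finset.measurable_sum univ fun i _ => (h.1 i).const_mul (a i)).pow_const
        2).aestronglyMeasurable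
    · filter_upwards [hsq] with ω hω
      rwa [Real.norm_eq_abs, abs_of_nonneg (sq_nonneg _)]
  have hle : ∫ ω, |∑ i, a i * ε i ω| ^ p ∂μ ≤ N ^ (p / 2 - 1) :=
    calc ∫ ω, |∑ i, a i * ε i ω| ^ p ∂μ ≤ ∫ ω, N ^ (p / 2 - 1) * (∑ i, a i * ε i ω) ^ 2 ∂μ :=
          integral_mono_of_nonneg (ae_of_all _ fun ω => by positivity) hint
            (hsq.mono fun ω hω => abs_rpow_le_of_sq_le hω hp)
      _ = N ^ (p / 2 - 1) := by rw [integral_const_mul, h.integral_sq_sum le_rfl, ha, mul_one]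
  calc (∫ ω, |∑ i, a i * ε i ω| ^ p ∂μ) ^ (1 / p) ≤ (N ^ (p / 2 - 1)) ^ (1 / p) :=
        Real.rpow_le_rpow (integral_nonneg fun ω => by positivity) hle (by positivity)
    _ = N ^ ((1 : ℝ) / 2 - 1 / p) := by
        rw [← Real.rpow_mul (Nat.cast_nonneg _)]
        congr 1
        field_simp

end IsKWiseRademacher

end Rademacher

namespace IsKWiseRademacher

variable {Ω : Type*} [MeasurableSpace Ω] {μ : Measure Ω} {n : ℕ} {εbar : Fin (n + 1) → Ω → ℝ}

lemma measure_forall_signProd_eq (h : IsKWiseRademacher μ (n + 1) εbar) {c : ℝ}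
    (hc : c = 1 ∨ c = -1) :
    μ {ω | ∀ S, signProd (fun j => εbar j ω) S = c} = 2⁻¹ ^ (n + 1) := by
  have hc0 : c ≠ 0 := by rcases hc with rfl | rfl <;> norm_num
  simp_rw [forall_signProd_eq_iff hc0]
  simpa using h.2 univ (by simp) (Fin.cons c fun _ => 1) (Fin.cases hc fun _ => Or.inl rfl)

lemma integral_abs_sum_signProd_rpow [IsProbabilityMeasure μ]
    (h : IsKWiseRademacher μ (n + 1) εbar) {p : ℝ} (hp : p ≠ 0) :
    ∫ ω, |∑ S, signProd (fun j => εbar j ω) S| ^ p ∂μ = ((2 ^ n : ℕ) : ℝ) ^ (p - 1) := by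
  set B := {ω | ∀ i : Fin n, εbar i.succ ω = 1}
  have hBm : MeasurableSet B := by
    have : B = ⋂ i : Fin n, εbar i.succ ⁻¹' {1} := by ext; simp [B]
    rw [this]
    exact MeasurableSet.iInter fun i => h.1 _ (measurableSet_singleton _)
  have hB : μ B = 2⁻¹ ^ n := by
    simpa [B, Fin.forall_fin_succ] using
      h.2 (univ.map (Fin.succEmb n)) (by simp) 1 fun _ => Or.inl rfl
  have hae : (fun ω => |∑ S, signProd (fun j => εbar j ω) S| ^ p) =ᵐ[μ]
      B.indicator fun _ => ((2 ^ n : ℕ) : ℝ) ^ p := by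
    filter_upwards [ae_all_iff.2 (h.ae_eq_one_or_neg_one (by omega))] with ω hω
    rw [abs_sum_signProd hω]
    by_cases hωB : ∀ i : Fin n, εbar i.succ ω = 1
    · rw [if_pos hωB, Set.indicator_of_mem (show ω ∈ B from hωB)]
      norm_cast
    · rw [if_neg hωB, Set.indicator_of_notMem (show ω ∉ B from hωB), Real.zero_rpow hp]
  rw [integral_congr_ae hae, integral_indicator_const _ hBm, measureReal_def, hB, smul_eq_mul,
    Real.rpow_sub_one (by positivity)]
  simp [div_eq_inv_mul]

end IsKWiseRademacher

section Cube

variable {m : ℕ}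

def cubeMeasure (m : ℕ) : Measure (Fin m → Bool) :=
  (PMF.uniformOfFintype (Fin m → Bool)).toMeasure

instance : IsProbabilityMeasure (cubeMeasure m) := PMF.toMeasure.isProbabilityMeasure _

def cubeSign (j : Fin m) (x : Fin m → Bool) : ℝ := if x j then 1 else -1

lemma cubeSign_eq_one_or_neg_one (j : Fin m) (x : Fin m → Bool) :
    cubeSign j x = 1 ∨ cubeSign j x = -1 := by
  unfold cubeSign
  split_ifs <;> simp

lemma integral_cubeMeasure (g : (Fin m → Bool) → ℝ) :
    ∫ x, g x ∂cubeMeasure m = (2 ^ m)⁻¹ * ∑ x, g x := by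
  rw [cubeMeasure, PMF.integral_eq_sum, mul_sum]
  simp [PMF.uniformOfFintype_apply]

lemma integral_prod_prod_cubeSign_eq_zero {ι : Type*} {t : Finset ι} {A : ι → Finset (Fin m)}
    {j : Fin m} (hj : Odd #(t.filter (j ∈ A ·))) :
    ∫ x, ∏ i ∈ t, ∏ l ∈ A i, cubeSign l x ∂cubeMeasure m = 0 := by
  set g : Fin m → Bool → ℝ := fun l b => (if b then 1 else -1) ^ #(t.filter (l ∈ A ·))
  have hprod (x : Fin m → Bool) : ∏ i ∈ t, ∏ l ∈ A i, cubeSign l x = ∏ l, g l (x l) :=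
    calc ∏ i ∈ t, ∏ l ∈ A i, cubeSign l x
        = ∏ i ∈ t, ∏ l, if l ∈ A i then cubeSign l x else 1 :=
          prod_congr rfl fun i _ => by rw [prod_ite_mem, univ_inter]
      _ = ∏ l, ∏ i ∈ t, if l ∈ A i then cubeSign l x else 1 := prod_comm
      _ = ∏ l, g l (x l) :=
          prod_congr rfl fun l _ => by rw [prod_ite, prod_const, prod_const_one, mul_one]; rfl
  have hj0 : ∑ b, g j b = 0 := by simp [g, hj.neg_one_pow]
  simp_rw [integral_cubeMeasure, hprod]
  rw [← Fintype.prod_sum g, prod_eq_zero (mem_univ j) hj0, mul_zero]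

lemma isKWiseRademacher_cubeSign (m k : ℕ) : IsKWiseRademacher (cubeMeasure m) k cubeSign := by
  refine .of_integral_prod_eq_zero (fun _ => Measurable.of_discrete)
    (fun j => ae_of_all _ (cubeSign_eq_one_or_neg_one j)) fun t ht _ => ?_
  obtain ⟨j, hj⟩ := ht
  have hodd : Odd #(t.filter (j ∈ ({·} : Fin m → Finset (Fin m)) ·)) := by
    simp [filter_eq, hj]
  simpa using integral_prod_prod_cubeSign_eq_zero hodd

lemma isKWiseRademacher_two_prod_cubeSign {ι : Type*} [DecidableEq ι] {A : ι → Finset (Fin m)}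
    (hA : Function.Injective A) (hne : ∀ i, (A i).Nonempty) :
    IsKWiseRademacher (cubeMeasure m) 2 fun i x => ∏ l ∈ A i, cubeSign l x := by
  refine .of_integral_prod_eq_zero (fun _ => Measurable.of_discrete)
    (fun i => ae_of_all _ fun x => prod_eq_one_or_neg_one fun l _ => cubeSign_eq_one_or_neg_one l x)
    fun t ht _ => ?_
  rcases (by have := ht.card_pos; omega : #t = 1 ∨ #t = 2) with h1 | h2
  · obtain ⟨i, rfl⟩ := card_eq_one.1 h1
    obtain ⟨j, hj⟩ := hne i
    refine integral_prod_prod_cubeSign_eq_zero (j := j) ?_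
    rw [filter_singleton, if_pos hj, card_singleton]
    exact odd_one
  · obtain ⟨i₁, i₂, hi, rfl⟩ := card_eq_two.1 h2
    obtain ⟨j, hj⟩ : ∃ j, ¬(j ∈ A i₁ ↔ j ∈ A i₂) := by
      by_contra! hc
      exact hi (hA (Finset.ext hc))
    refine integral_prod_prod_cubeSign_eq_zero (j := j) ?_
    by_cases h₁ : j ∈ A i₁
    · have h₂ : j ∉ A i₂ := fun h₂ => hj (iff_of_true h₁ h₂)
      simp [filter_insert, filter_singleton, h₁, h₂]
    · have h₂ : j ∈ A i₂ := by_contra fun h₂ => hj (iff_of_false h₁ h₂)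
      simp [filter_insert, filter_singleton, h₁, h₂]

end Cube

lemma rpow_integral_abs_sum_cube_signProd (n : ℕ) (e : Fin (2 ^ n) ≃ Finset (Fin n)) {p : ℝ}
    (hp : 0 < p) :
    (∫ x, |∑ k, ((2 ^ n : ℕ) : ℝ) ^ (-(1 / 2) : ℝ) * ∏ j ∈ signSupport (e k), cubeSign j x| ^ p
      ∂cubeMeasure (n + 1)) ^ (1 / p) = ((2 ^ n : ℕ) : ℝ) ^ ((1 : ℝ) / 2 - 1 / p) := by
  set N : ℝ := ((2 ^ n : ℕ) : ℝ)
  have hN : 0 < N := by positivity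
  have hsum (x : Fin (n + 1) → Bool) :
      ∑ k, N ^ (-(1 / 2) : ℝ) * ∏ j ∈ signSupport (e k), cubeSign j x =
        N ^ (-(1 / 2) : ℝ) * ∑ S, signProd (fun j => cubeSign j x) S := by
    rw [← mul_sum, e.sum_comp fun S => ∏ j ∈ signSupport S, cubeSign j x]
    simp [signProd_eq_prod_signSupport]
  simp_rw [hsum, abs_mul, Real.mul_rpow (abs_nonneg _) (abs_nonneg _)]
  rw [integral_const_mul,
    (isKWiseRademacher_cubeSign (n + 1) (n + 1)).integral_abs_sum_signProd_rpow hp.ne',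
    abs_of_pos (by positivity), ← Real.rpow_mul hN.le, ← Real.rpow_add hN, ← Real.rpow_mul hN.le]
  congr 1
  field_simp
  ring

theorem CNpk_two_pow (n : ℕ) {p : ℝ} (hp : 2 ≤ p) :
    CNpk (2 ^ n) p 2 = ((2 ^ n : ℕ) : ℝ) ^ ((1 : ℝ) / 2 - 1 / p) := by
  refine IsGreatest.csSup_eq ⟨?_, ?_⟩
  · set N : ℝ := ((2 ^ n : ℕ) : ℝ)
    have hN : 0 < N := by positivity
    let e : Fin (2 ^ n) ≃ Finset (Fin n) := (Fintype.equivFinOfCardEq (by simp)).symm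
    have hunit : ∑ _k : Fin (2 ^ n), (N ^ (-(1 / 2) : ℝ)) ^ 2 = 1 := by
      rw [sum_const, card_univ, Fintype.card_fin, nsmul_eq_mul, ← Real.rpow_natCast,
        ← Real.rpow_mul hN.le]
      norm_num [N, Real.rpow_neg_one]
    exact ⟨Fin (n + 1) → Bool, inferInstance, cubeMeasure (n + 1), inferInstance,
      fun k x => ∏ j ∈ signSupport (e k), cubeSign j x, fun _ => N ^ (-(1 / 2) : ℝ),
      isKWiseRademacher_two_prod_cubeSign (signSupport_injective.comp e.injective)
        fun _ => cons_nonempty _,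
      hunit, (rpow_integral_abs_sum_cube_signProd n e (by linarith)).symm⟩
  · rintro _ ⟨Ω, _, ν, hν, ε, a, hε, ha, rfl⟩
    simpa using hε.rpow_integral_abs_sum_le ha hp

open scoped Classical in
/-- for the family `ε_S = ε̄₀ ∏_{i∈S} ε̄ᵢ` (with `N = 2^n`): almost surely all
`ε_S` equal `1`, or all equal `−1`, or exactly half equal `1`; the all-`1` and all-`−1` events
each have probability `1/2^{n+1} = 1/(2N)`; consequently `E|∑_S ε_S|^p = N^{p-1}` for `p ≥ 2`
and `C(N,p,2) = N^{1/2-1/p}` for `N = 2^n`. -/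
theorem product_family_moments {Ω : Type*} [MeasurableSpace Ω]
    (μ : Measure Ω) [IsProbabilityMeasure μ] {n : ℕ}
    (εbar : Fin (n + 1) → Ω → ℝ) (h : IsKWiseRademacher μ (n + 1) εbar)
    (f : Finset (Fin n) → Ω → ℝ)
    (hf : ∀ S ω, f S ω = εbar 0 ω * ∏ i ∈ S, εbar i.succ ω) :
    (∀ᵐ ω ∂μ, (∀ S : Finset (Fin n), f S ω = 1) ∨ (∀ S : Finset (Fin n), f S ω = -1) ∨
      2 * (Finset.univ.filter (fun S : Finset (Fin n) => f S ω = 1)).card = 2 ^ n) ∧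
    μ {ω | ∀ S : Finset (Fin n), f S ω = 1} = (2 : ℝ≥0∞)⁻¹ ^ (n + 1) ∧
    μ {ω | ∀ S : Finset (Fin n), f S ω = -1} = (2 : ℝ≥0∞)⁻¹ ^ (n + 1) ∧
    (∀ p : ℝ, 2 ≤ p →
      (∫ ω, |∑ S : Finset (Fin n), f S ω| ^ p ∂μ) = ((2 ^ n : ℕ) : ℝ) ^ (p - 1)) ∧
    (∀ p : ℝ, 2 ≤ p →
      CNpk (2 ^ n) p 2 = ((2 ^ n : ℕ) : ℝ) ^ ((1 : ℝ) / 2 - 1 / p)) := by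
  obtain rfl : f = fun S ω => signProd (fun j => εbar j ω) S := funext₂ hf
  refine ⟨?_, h.measure_forall_signProd_eq (Or.inl rfl),
    h.measure_forall_signProd_eq (Or.inr rfl),
    fun p hp => h.integral_abs_sum_signProd_rpow (by positivity), fun p hp => CNpk_two_pow n hp⟩
  filter_upwards [ae_all_iff.2 (h.ae_eq_one_or_neg_one (by omega))] with ω hω
  exact signProd_trichotomy hω
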